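/- arXiv:2311.13362 — 2 statements merged into one kernel-verified Lean document; each statement's English description precedes it below -/
import Mathlib

section
/- The spine inclusion Δ^n_Seg ↪ Δ^n is inner anodyne for every n ≥ 1. -/
/-!
`Δ[n]` is built from its spine by attaching simplices one at a time, each along an inner horn.
Call a vertex set `S` a filler if `#S ≥ 3` and `S` contains both its largest element `b` and
`b - 1`. Adding the fillers in colexicographic order, when `S` is reached every face of `S` other
than `S` and `S \ {b - 1}` is already present: a face `W` missing another vertex of `S` lies in an
edge `{i, i + 1}` or in the filler `W ∪ {max W - 1}`, which is colex-smaller than `S`. So the step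
is a pushout of `Λ[k, j] ⟶ Δ[k]`, where `j` is the position of `b - 1` in `S`; `j` is inner
because `S` has a vertex below `b - 1`. Finally `univ` (an edge if `n = 1`, a filler otherwise)
has been added, so the union of the faces is all of `Δ[n]`.
-/

open CategoryTheory CategoryTheory.Limits Simplicial SSet

universe w v u

namespace Stmt12

variable {C : Type u} [Category.{v} C]

/-- A class of morphisms is stable under retracts if any retract (in the arrow
category) of a morphism in the class is again in the class. -/
def StableUnderRetracts (P : MorphismProperty C) : Prop :=
  ∀ ⦃X Y X' Y' : C⦄ (f : X ⟶ Y) (g : X' ⟶ Y')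
    (iX : X ⟶ X') (iY : Y ⟶ Y') (rX : X' ⟶ X) (rY : Y' ⟶ Y),
    iX ≫ rX = 𝟙 X → iY ≫ rY = 𝟙 Y →
    iX ≫ g = f ≫ iY → rX ≫ f = g ≫ rY → P g → P f

/-- The restriction of a diagram indexed by a well-ordered type to `{i | i < j}`. -/
def restrictionLT {J : Type w} [Preorder J] (F : J ⥤ C) (j : J) : Set.Iio j ⥤ C :=
  (Monotone.functor (f := fun i : Set.Iio j => (i : J)) (fun _ _ h => h)) ⋙ F

/-- The canonical cocone on the restriction of `F` to `{i | i < j}` with point `F.obj j`. -/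
def coconeLT {J : Type w} [Preorder J] (F : J ⥤ C) (j : J) : Cocone (restrictionLT F j) where
  pt := F.obj j
  ι :=
    { app := fun i => F.map (homOfLE i.2.le)
      naturality := by
        intro i i' h
        dsimp [restrictionLT]
        rw [← F.map_comp, Category.comp_id]
        congr 1 }

/-- A class of morphisms is stable under transfinite composition if, for any diagram
indexed by a well-ordered type which is continuous at limit stages and all of whose
successor maps lie in the class, the map from the first object to the colimit lies in
the class. -/
def StableUnderTransfiniteComposition (P : MorphismProperty C) : Prop :=
  ∀ (J : Type w) [LinearOrder J] [SuccOrder J] [OrderBot J] [WellFoundedLT J]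
    (F : J ⥤ C),
    (∀ j : J, ¬IsMax j → P (F.map (homOfLE (Order.le_succ j)))) →
    (∀ j : J, Order.IsSuccLimit j → Nonempty (IsColimit (coconeLT F j))) →
    ∀ (c : Cocone F), IsColimit c → P (c.ι.app ⊥)

/-- A class of morphisms is weakly saturated if it is stable under cobase change,
retracts and transfinite composition. -/
def WeaklySaturated (P : MorphismProperty C) : Prop :=
  P.IsStableUnderCobaseChange ∧ StableUnderRetracts P ∧
    StableUnderTransfiniteComposition.{w} P

/-- The weakly saturated class generated by a class `S`: the smallest weakly saturated
class containing `S`. -/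
def saturation (S : MorphismProperty C) : MorphismProperty C :=
  fun _ _ f => ∀ P : MorphismProperty C, WeaklySaturated.{w} P → S ≤ P → P f

/-- The inner horn inclusions `Λ[n, i] ⟶ Δ[n]`, `0 < i < n` (closed under isomorphism). -/
def InnerHorns : MorphismProperty SSet.{0} := fun X Y f =>
  ∃ (n : ℕ) (i : Fin (n + 1)) (_ : 0 < (i : ℕ)) (_ : (i : ℕ) < n)
    (eX : X ≅ Λ[n, i]) (eY : Δ[n] ≅ Y),
    f = eX.hom ≫ Λ[n, i].ι ≫ eY.hom

/-- A morphism of simplicial sets is inner anodyne if it lies in the weakly saturated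
class generated by the inner horn inclusions. -/
def InnerAnodyne : MorphismProperty SSet.{0} := saturation.{0} InnerHorns

/-- The spine of `Δ[n]`: the simplicial subset which is the union of the edges
`{i, i+1}`. -/
def spine (n : ℕ) : SSet.{0} where
  obj m := { α : Δ[n].obj m // ∃ i : Fin n,
    ∀ j, stdSimplex.asOrderHom α j = i.castSucc ∨ stdSimplex.asOrderHom α j = i.succ }
  map f := TypeCat.ofHom fun α => ⟨Δ[n].map f α.1, by
    obtain ⟨i, hi⟩ := α.2
    exact ⟨i, fun j => hi _⟩⟩

/-- The inclusion of the spine into the standard simplex. -/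
def spineInclusion (n : ℕ) : spine n ⟶ Δ[n] where
  app m := TypeCat.ofHom fun α => α.1

variable {P : MorphismProperty C}

lemma StableUnderTransfiniteComposition.map_bot_top_of_fin
    (hP : StableUnderTransfiniteComposition.{0} P) {m : ℕ} (F : Fin (m + 1) ⥤ C)
    (hF : ∀ j : Fin (m + 1), ¬IsMax j → P (F.map (homOfLE (Order.le_succ j)))) :
    P (F.map (homOfLE (bot_le : (⊥ : Fin (m + 1)) ≤ ⊤))) :=
  hP (Fin (m + 1)) F hF (fun _ hj => (hj.not_isMin hj.isSuccPrelimit.isMin).elim)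
    (coconeOfDiagramTerminal isTerminalTop F) (colimitOfDiagramTerminal isTerminalTop F)

namespace WeaklySaturated

variable (hP : WeaklySaturated.{0} P)
include hP

lemma id_mem (X : C) : P (𝟙 X) :=
  hP.2.2.map_bot_top_of_fin ((Functor.const (Fin 1)).obj X)
    fun j hj => (hj fun b _ => (Subsingleton.elim (α := Fin 1) b j).le).elim

lemma comp_mem {X Y Z : C} {u : X ⟶ Y} {v : Y ⟶ Z} (hu : P u) (hv : P v) : P (u ≫ v) :=
  hP.2.2.map_bot_top_of_fin (ComposableArrows.mk₂ u v) fun j hj => by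
    fin_cases j
    · exact hu
    · exact hv
    · exact (hj isMax_top).elim

lemma iso_hom_mem {X Y : C} (e : X ≅ Y) : P e.hom :=
  hP.2.1 e.hom (𝟙 X) (𝟙 X) e.inv (𝟙 X) e.hom (by simp) (by simp) (by simp) (by simp)
    (hP.id_mem X)

lemma of_isIso {X Y : C} (f : X ⟶ Y) [IsIso f] : P f :=
  hP.iso_hom_mem (asIso f)

end WeaklySaturated

open Subcomplex

lemma homOfLE_mem_congr {P : MorphismProperty SSet.{u}} {X : SSet.{u}} {A A' B B' : X.Subcomplex}
    (hA : A = A') (hB : B = B') (h : A ≤ B) (h' : A' ≤ B') (hP : P (homOfLE h)) :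
    P (homOfLE h') := by
  subst hA hB
  exact hP

lemma Subcomplex.image_preimage_eq_inf_range {X Y : SSet.{u}} (B : X.Subcomplex) (f : Y ⟶ X) :
    (B.preimage f).image f = B ⊓ range f := by
  ext m x
  constructor
  · rintro ⟨y, hy, rfl⟩
    exact ⟨hy, y, rfl⟩
  · rintro ⟨hx, y, rfl⟩
    exact ⟨y, hx, rfl⟩

lemma innerHorns_homOfLE_image_range {k : ℕ} {j : Fin (k + 1)} (h0 : 0 < (j : ℕ))
    (hk : (j : ℕ) < k) {X : SSet.{0}} (g : Δ[k] ⟶ X) [Mono g] :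
    InnerHorns (homOfLE (image_le_range Λ[k, j] g)) := by
  have : Mono (Λ[k, j].toImage g) := mono_of_mono_fac (toImage_ι _ _)
  have : IsIso (Λ[k, j].toImage g) := isIso_of_mono_of_epi _
  refine ⟨k, j, h0, hk, (asIso (Λ[k, j].toImage g)).symm, asIso (toRange g), ?_⟩
  rw [← cancel_mono (range g).ι, Iso.symm_hom, asIso_inv, asIso_hom, Category.assoc,
    Category.assoc, toRange_ι, homOfLE_ι, ← toImage_ι, IsIso.inv_hom_id_assoc]

lemma WeaklySaturated.homOfLE_mem_of_preimage_eq_horn {P : MorphismProperty SSet.{0}}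
    (hP : WeaklySaturated.{0} P) (hP' : InnerHorns ≤ P) {X : SSet.{0}} {A B : X.Subcomplex}
    (hAB : A ≤ B) {k : ℕ} {j : Fin (k + 1)} (h0 : 0 < (j : ℕ)) (hk : (j : ℕ) < k)
    (g : Δ[k] ⟶ X) [Mono g] (hB : A ⊔ range g = B) (h : A.preimage g = Λ[k, j]) :
    P (homOfLE hAB) := by
  have := hP.1
  have sq : BicartSq (Λ[k, j].image g) A (range g) B :=
    ⟨hB, by rw [← h, Subcomplex.image_preimage_eq_inf_range]⟩
  exact P.of_isPushout sq.isPushout (hP' _ (innerHorns_homOfLE_image_range h0 hk g))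

section Faces

variable {n : ℕ}

open Finset

def facesSubcomplex (G : Set (Finset (Fin (n + 1)))) : (Δ[n] : SSet.{0}).Subcomplex :=
  ⨆ T ∈ G, stdSimplex.face T

lemma mem_facesSubcomplex {G : Set (Finset (Fin (n + 1)))} {d : ℕ} (x : Δ[n] _⦋d⦌) :
    x ∈ (facesSubcomplex G).obj _ ↔ ∃ T ∈ G, ∀ i, x i ∈ T := by
  simp [facesSubcomplex]

lemma facesSubcomplex_mono : Monotone (facesSubcomplex (n := n)) :=
  fun _ _ h => biSup_mono h

lemma facesSubcomplex_insert (S : Finset (Fin (n + 1))) (G : Set (Finset (Fin (n + 1)))) :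
    facesSubcomplex (insert S G) = stdSimplex.face S ⊔ facesSubcomplex G :=
  iSup_insert

lemma facesSubcomplex_eq_top {G : Set (Finset (Fin (n + 1)))} (h : univ ∈ G) :
    facesSubcomplex G = ⊤ :=
  top_unique ((stdSimplex.face_univ n).ge.trans (le_biSup _ h))

noncomputable def faceInclusion (S : Finset (Fin (n + 1))) {k : ℕ} (hS : #S = k + 1) :
    Δ[k] ⟶ Δ[n] :=
  SSet.stdSimplex.map (SimplexCategory.mkHom (S.orderEmbOfFin hS).toOrderHom)

variable (S : Finset (Fin (n + 1))) {k : ℕ} (hS : #S = k + 1)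

lemma faceInclusion_app_apply {d : ℕ} (y : Δ[k] _⦋d⦌) (i : Fin (d + 1)) :
    (faceInclusion S hS).app _ y i = S.orderEmbOfFin hS (y i) := rfl

instance : Mono (faceInclusion S hS) := by
  have : Mono (SimplexCategory.mkHom (S.orderEmbOfFin hS).toOrderHom) :=
    SimplexCategory.mono_iff_injective.2 (S.orderEmbOfFin hS).injective
  rw [NatTrans.mono_iff_mono_app]
  intro m
  rw [mono_iff_injective]
  intro y₁ y₂ h
  exact stdSimplex.objEquiv.injective ((cancel_mono _).1 (stdSimplex.objEquiv.symm.injective h))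

lemma range_faceInclusion : range (faceInclusion S hS) = stdSimplex.face S := by
  rw [range_eq_ofSimplex, faceInclusion, SSet.yonedaEquiv_map,
    stdSimplex.face_eq_ofSimplex S k (S.orderIsoOfFin hS)]
  congr 2

lemma preimage_facesSubcomplex_faceInclusion {G : Set (Finset (Fin (n + 1)))} (j : Fin (k + 1))
    (hG : ∀ W ⊆ S, (∃ T ∈ G, W ⊆ T) ↔ ¬ S.erase (S.orderEmbOfFin hS j) ⊆ W) :
    (facesSubcomplex G).preimage (faceInclusion S hS) = Λ[k, j] := by
  ext ⟨m⟩ y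
  induction m using SimplexCategory.rec with | _ d
  change (faceInclusion S hS).app _ y ∈ (facesSubcomplex G).obj _ ↔ y ∈ (Λ[k, j]).obj _
  simp only [mem_facesSubcomplex, mem_horn_iff_notMem_range, faceInclusion_app_apply]
  set e := S.orderEmbOfFin hS
  set W := univ.image fun i => e (y i)
  have hWS : W ⊆ S := image_subset_iff.2 fun i _ => S.orderEmbOfFin_mem hS _
  have hW (T : Finset (Fin (n + 1))) : (∀ i, e (y i) ∈ T) ↔ W ⊆ T := by
    simp [W, image_subset_iff]
  simp only [hW, hG W hWS, not_subset, mem_erase, W, mem_image, mem_univ, true_and, not_exists]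
  constructor
  · rintro ⟨s, ⟨hsj, hsS⟩, hsW⟩
    obtain ⟨q, rfl⟩ : s ∈ Set.range e := by rwa [range_orderEmbOfFin]
    exact ⟨q, fun h => hsj (h ▸ rfl), fun ⟨i, hi⟩ => hsW i (hi ▸ rfl)⟩
  · rintro ⟨q, hqj, hq⟩
    exact ⟨e q, ⟨e.injective.ne hqj, S.orderEmbOfFin_mem hS q⟩,
      fun i hi => hq ⟨i, e.injective hi⟩⟩

variable {S} in
lemma WeaklySaturated.homOfLE_facesSubcomplex_insert_mem {P : MorphismProperty SSet.{0}}
    (hP : WeaklySaturated.{0} P) (hP' : InnerHorns ≤ P) {G G' : Set (Finset (Fin (n + 1)))}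
    (hG' : G' = insert S G) (h : facesSubcomplex G ≤ facesSubcomplex G')
    {p c d : Fin (n + 1)} (hp : p ∈ S) (hc : c ∈ S) (hd : d ∈ S) (hcp : c < p) (hpd : p < d)
    (hG : ∀ W ⊆ S, (∃ T ∈ G, W ⊆ T) ↔ ¬ S.erase p ⊆ W) :
    P (homOfLE h) := by
  obtain ⟨k, hS⟩ := Nat.exists_eq_succ_of_ne_zero (card_ne_zero_of_mem hp)
  have hrange (x : Fin (n + 1)) (hx : x ∈ S) : ∃ i, S.orderEmbOfFin hS i = x := by
    rwa [← Set.mem_range, range_orderEmbOfFin]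
  obtain ⟨j, rfl⟩ := hrange p hp
  obtain ⟨i, rfl⟩ := hrange c hc
  obtain ⟨i', rfl⟩ := hrange d hd
  have hij : i < j := (S.orderEmbOfFin hS).lt_iff_lt.1 hcp
  have hji' : j < i' := (S.orderEmbOfFin hS).lt_iff_lt.1 hpd
  refine hP.homOfLE_mem_of_preimage_eq_horn hP' h (j := j) (by omega) (by omega)
    (faceInclusion S hS) ?_ (preimage_facesSubcomplex_faceInclusion S hS j hG)
  rw [hG', facesSubcomplex_insert, range_faceInclusion, sup_comm]

end Faces

section Fillers

variable {n : ℕ}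

open Finset Colex

def edge (i : Fin n) : Finset (Fin (n + 1)) := {i.castSucc, i.succ}

def IsFiller (S : Finset (Fin (n + 1))) : Prop :=
  3 ≤ #S ∧ ∃ a : Fin n, edge a ⊆ S ∧ ∀ c ∈ S, c ≤ a.succ

lemma card_edge (i : Fin n) : #(edge i) = 2 :=
  card_pair (Fin.castSucc_lt_succ (i := i)).ne

lemma val_eq_or_of_mem_edge {i : Fin n} {x : Fin (n + 1)} (hx : x ∈ edge i) :
    (x : ℕ) = i ∨ (x : ℕ) = i + 1 := by
  simp only [edge, mem_insert, mem_singleton] at hx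
  rcases hx with rfl | rfl
  · exact Or.inl rfl
  · exact Or.inr rfl

lemma subset_zero_or_exists_top (W : Finset (Fin (n + 1))) :
    W ⊆ {0} ∨ ∃ y : Fin n, y.succ ∈ W ∧ ∀ c ∈ W, c ≤ y.succ := by
  rcases W.eq_empty_or_nonempty with rfl | hW
  · exact Or.inl (empty_subset _)
  by_cases h0 : W.max' hW = 0
  · exact Or.inl fun c hc => mem_singleton.2 (le_antisymm (h0 ▸ W.le_max' c hc) (Fin.zero_le c))
  · obtain ⟨y, hy⟩ := Fin.exists_succ_eq.2 h0
    exact Or.inr ⟨y, hy ▸ W.max'_mem hW, fun c hc => hy ▸ W.le_max' c hc⟩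

lemma insert_eq_edge_or_isFiller {y : Fin n} {W : Finset (Fin (n + 1))} (hy : y.succ ∈ W)
    (htop : ∀ c ∈ W, c ≤ y.succ) :
    insert y.castSucc W = edge y ∨ IsFiller (insert y.castSucc W) := by
  have hsub : edge y ⊆ insert y.castSucc W :=
    insert_subset (mem_insert_self _ _) (singleton_subset_iff.2 (mem_insert_of_mem hy))
  by_cases hcard : #(insert y.castSucc W) ≤ 2
  · exact Or.inl (eq_of_subset_of_card_le hsub (by rw [card_edge]; exact hcard)).symm
  · refine Or.inr ⟨by omega, y, hsub, fun c hc => ?_⟩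
    rcases mem_insert.1 hc with rfl | hc
    · exact (Fin.castSucc_lt_succ (i := y)).le
    · exact htop c hc

lemma exists_mem_lt_castSucc {S : Finset (Fin (n + 1))} {a : Fin n} (hcard : 3 ≤ #S)
    (htop : ∀ c ∈ S, c ≤ a.succ) : ∃ c ∈ S, c < a.castSucc := by
  obtain ⟨c, hc⟩ : ((S.erase a.castSucc).erase a.succ).Nonempty := by
    rw [← card_pos]
    have h1 := pred_card_le_card_erase (s := S) (a := a.castSucc)
    have h2 := pred_card_le_card_erase (s := S.erase a.castSucc) (a := a.succ)
    omega
  obtain ⟨hcs, hcc, hcS⟩ : c ≠ a.succ ∧ c ≠ a.castSucc ∧ c ∈ S := by simpa using hc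
  exact ⟨c, hcS, (Fin.le_castSucc_iff.2 ((htop c hcS).lt_of_ne hcs)).lt_of_ne hcc⟩

lemma not_erase_subset_edge {S : Finset (Fin (n + 1))} {a : Fin n} (hcard : 3 ≤ #S)
    (htop : ∀ c ∈ S, c ≤ a.succ) (hsucc : a.succ ∈ S) (i : Fin n) :
    ¬ S.erase a.castSucc ⊆ edge i := by
  intro hsub
  obtain ⟨c, hcS, hc⟩ := exists_mem_lt_castSucc hcard htop
  have hc' := val_eq_or_of_mem_edge (hsub (mem_erase.2 ⟨hc.ne, hcS⟩))
  have ha' := val_eq_or_of_mem_edge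
    (hsub (mem_erase.2 ⟨(Fin.castSucc_lt_succ (i := a)).ne', hsucc⟩))
  rw [Fin.lt_def, Fin.val_castSucc] at hc
  rw [Fin.val_succ] at ha'
  omega

lemma not_erase_subset_of_isFiller {S T : Finset (Fin (n + 1))} {a : Fin n}
    (ha : edge a ⊆ S) (htop : ∀ c ∈ S, c ≤ a.succ) (hT : IsFiller T)
    (hTS : toColex T < toColex S) : ¬ S.erase a.castSucc ⊆ T := by
  intro hsub
  obtain ⟨-, b, hb, htopT⟩ := hT
  have haT : a.succ ∈ T :=
    hsub (mem_erase.2 ⟨(Fin.castSucc_lt_succ (i := a)).ne', ha (by simp [edge])⟩)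
  obtain rfl : b = a := Fin.succ_injective _ (le_antisymm
    (forall_le_mono hTS.le htop _ (hb (by simp [edge]))) (htopT _ haT))
  have hST : S ⊆ T := by
    rw [← insert_erase (ha (by simp [edge]) : b.castSucc ∈ S)]
    exact insert_subset (hb (by simp [edge])) hsub
  exact not_le_of_gt hTS (toColex_le_toColex_of_subset hST)

lemma exists_superset_of_not_erase_subset {S W : Finset (Fin (n + 1))} {a : Fin n}
    (ha : edge a ⊆ S) (htop : ∀ c ∈ S, c ≤ a.succ) (hWS : W ⊆ S)
    (hW : ¬ S.erase a.castSucc ⊆ W) :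
    ∃ T, W ⊆ T ∧ (T ∈ Set.range edge ∨ (IsFiller T ∧ toColex T < toColex S)) := by
  rcases subset_zero_or_exists_top W with hW0 | ⟨y, hy, hytop⟩
  · exact ⟨edge ⟨0, a.pos⟩, hW0.trans (by simp [edge]), Or.inl ⟨_, rfl⟩⟩
  refine ⟨insert y.castSucc W, subset_insert _ _, ?_⟩
  rcases insert_eq_edge_or_isFiller hy hytop with h | h
  · exact Or.inl ⟨y, h.symm⟩
  refine Or.inr ⟨h, ?_⟩
  rcases (htop _ (hWS hy)).lt_or_eq with hlt | heq
  · calc toColex (insert y.castSucc W) < toColex {a.succ} := by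
          refine toColex_lt_singleton.2 fun c hc => lt_of_le_of_lt ?_ hlt
          rcases mem_insert.1 hc with rfl | hc
          · exact (Fin.castSucc_lt_succ (i := y)).le
          · exact hytop c hc
      _ ≤ toColex S := singleton_le_toColex.2 ⟨a.succ, ha (by simp [edge]), le_rfl⟩
  · obtain rfl : y = a := Fin.succ_injective _ heq
    refine toColex_lt_toColex_of_ssubset (ssubset_of_subset_of_ne
      (insert_subset (ha (by simp [edge])) hWS) fun hS => hW fun x hx => ?_)
    rw [mem_erase, ← hS, mem_insert] at hx
    exact hx.2.resolve_left hx.1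

lemma exists_superset_iff_not_erase_subset {S : Finset (Fin (n + 1))} {a : Fin n}
    (hcard : 3 ≤ #S) (ha : edge a ⊆ S) (htop : ∀ c ∈ S, c ≤ a.succ)
    {𝒜 : Set (Finset (Fin (n + 1)))} (h𝒜 : ∀ T, T ∈ 𝒜 ↔ IsFiller T ∧ toColex T < toColex S)
    (W : Finset (Fin (n + 1))) (hWS : W ⊆ S) :
    (∃ T ∈ Set.range edge ∪ 𝒜, W ⊆ T) ↔ ¬ S.erase a.castSucc ⊆ W := by
  constructor
  · rintro ⟨T, hT, hWT⟩ hSW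
    rcases hT with ⟨i, rfl⟩ | hT
    · exact not_erase_subset_edge hcard htop (ha (by simp [edge])) i (hSW.trans hWT)
    · rw [h𝒜] at hT
      exact not_erase_subset_of_isFiller ha htop hT.1 hT.2 (hSW.trans hWT)
  · intro hW
    obtain ⟨T, hWT, hT⟩ := exists_superset_of_not_erase_subset ha htop hWS hW
    exact ⟨T, hT.imp_right (h𝒜 T).2, hWT⟩

lemma univ_mem_range_edge_or_isFiller (hn : 1 ≤ n) :
    (univ : Finset (Fin (n + 1))) ∈ Set.range edge ∨ IsFiller (univ : Finset (Fin (n + 1))) := by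
  obtain rfl | hn := hn.eq_or_lt
  · exact Or.inl ⟨0, by decide⟩
  · refine Or.inr ⟨by simp; omega, ⟨n - 1, by omega⟩, subset_univ _, fun c _ => ?_⟩
    rw [Fin.le_def]
    change (c : ℕ) ≤ n - 1 + 1
    omega

end Fillers

section Spine

variable {n : ℕ}

open Finset Colex

theorem WeaklySaturated.homOfLE_facesSubcomplex_range_edge_union_mem {P : MorphismProperty SSet.{0}}
    (hP : WeaklySaturated.{0} P) (hP' : InnerHorns ≤ P) (𝒜 : Finset (Finset (Fin (n + 1))))
    (hfill : ∀ T ∈ 𝒜, IsFiller T)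
    (hlow : ∀ S ∈ 𝒜, ∀ T, IsFiller T → toColex T < toColex S → T ∈ 𝒜) :
    P (homOfLE (facesSubcomplex_mono
      (Set.subset_union_left : Set.range (edge (n := n)) ⊆ Set.range edge ∪ ↑𝒜))) := by
  classical
  induction 𝒜 using Finset.induction_on_max_value (toColex : Finset (Fin (n + 1)) → _) with
  | empty => exact homOfLE_mem_congr rfl (by simp) le_rfl _ (hP.id_mem _)
  | insert S 𝒜 hS𝒜 hmax ih =>
    have h𝒜 (T : Finset (Fin (n + 1))) : T ∈ (𝒜 : Set _) ↔ IsFiller T ∧ toColex T < toColex S :=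
      ⟨fun hT => ⟨hfill T (mem_insert_of_mem hT),
          (hmax T hT).lt_of_ne fun h => hS𝒜 (toColex_inj.1 h ▸ hT)⟩,
        fun ⟨hT, hTS⟩ => (mem_insert.1 (hlow S (mem_insert_self S 𝒜) T hT hTS)).resolve_left
          fun h => hTS.ne (h ▸ rfl)⟩
    obtain ⟨hcard, a, ha, htop⟩ := hfill S (mem_insert_self S 𝒜)
    obtain ⟨c, hcS, hc⟩ := exists_mem_lt_castSucc hcard htop
    have hprev := ih (fun T hT => ((h𝒜 T).1 hT).1)
      fun S' hS' T hT hTS' => (h𝒜 T).2 ⟨hT, hTS'.trans_le (hmax S' hS')⟩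
    have hstep := hP.homOfLE_facesSubcomplex_insert_mem hP'
      (by rw [coe_insert, Set.union_insert])
      (facesSubcomplex_mono (Set.union_subset_union_right _ (coe_subset.2 (subset_insert _ _))))
      (ha (by simp [edge])) hcS (ha (by simp [edge])) hc Fin.castSucc_lt_succ
      (exists_superset_iff_not_erase_subset hcard ha htop h𝒜)
    exact hP.comp_mem hprev hstep

instance : Mono (spineInclusion n) := by
  rw [NatTrans.mono_iff_mono_app]
  intro m
  rw [mono_iff_injective]
  exact Subtype.val_injective

lemma range_spineInclusion : range (spineInclusion n) = facesSubcomplex (Set.range edge) := by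
  ext ⟨m⟩ x
  induction m using SimplexCategory.rec with | _ d
  rw [mem_facesSubcomplex]
  constructor
  · rintro ⟨⟨y, i, hi⟩, rfl⟩
    refine ⟨edge i, ⟨i, rfl⟩, fun j => ?_⟩
    simp only [edge, mem_insert, mem_singleton]
    exact hi j
  · rintro ⟨_, ⟨i, rfl⟩, hi⟩
    refine ⟨⟨x, i, fun j => ?_⟩, rfl⟩
    have := hi j
    simp only [edge, mem_insert, mem_singleton] at this
    exact this

end Spine

/-- the spine inclusion `Δ[n]_Seg ↪ Δ[n]` is inner anodyne for all
`n ≥ 1`. -/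
theorem stmt12 (n : ℕ) (hn : 1 ≤ n) : InnerAnodyne (spineInclusion n) := by
  intro P hP hP'
  classical
  let 𝒜 : Finset (Finset (Fin (n + 1))) := Finset.univ.filter IsFiller
  have hfill := hP.homOfLE_facesSubcomplex_range_edge_union_mem hP' 𝒜 (by simp [𝒜])
    fun _ _ T hT _ => by simp [𝒜, hT]
  have htop : facesSubcomplex (Set.range edge ∪ ↑𝒜) = ⊤ := facesSubcomplex_eq_top
    ((univ_mem_range_edge_or_isFiller hn).imp_right fun h => by simp [𝒜, h])
  have hrange : P (homOfLE (le_top : range (spineInclusion n) ≤ ⊤)) :=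
    homOfLE_mem_congr range_spineInclusion.symm htop _ _ hfill
  exact hP.comp_mem (hP.of_isIso (toRange _)) (hP.comp_mem hrange (hP.of_isIso (topIso _).hom))

end Stmt12
end

section
/- Let L : C ⇄ D : R be an adjunction between monoidal categories where L is a (strong) monoidal functor and R is its lax monoidal right adjoint. Then for any object set X, composition with L and R induces an adjunction L_* ⊣ R_* between the categories of C-enriched categories with object set X and D-enriched categories with object set X. -/
/-! Transposing along a monoidal adjunction `L ⊣ R` sends `η L` to `ε R` and
`δ L ≫ (counit ⊗ counit)` to `μ R`. As `L` is strong, `ε L` and `μ L` are invertible, so a family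
of maps `L (A x y) ⟶ B x y` respects identities and composition exactly when its family of
adjuncts `A x y ⟶ R (B x y)` does; `adj.homEquiv`, applied Hom object by Hom object, is then the
required natural bijection. -/

open CategoryTheory MonoidalCategory CategoryTheory.Functor.LaxMonoidal

universe w w' v v' u

namespace Stmt17

variable (V : Type v) [Category.{w} V] [MonoidalCategory V]
variable (V' : Type v') [Category.{w'} V'] [MonoidalCategory V']

structure EnrCat (X : Type u) where
  str : EnrichedCategory V X

variable {V V'} {X : Type u}

/-- Identity-on-objects enriched functors. -/
@[ext]
structure EnrHom (A B : EnrCat V X) where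
  app : ∀ x y : X, A.str.Hom x y ⟶ B.str.Hom x y
  id_app : ∀ x, A.str.id x ≫ app x x = B.str.id x := by aesop_cat
  comp_app : ∀ x y z, A.str.comp x y z ≫ app x z =
    (app x y ⊗ₘ app y z) ≫ B.str.comp x y z := by aesop_cat

attribute [simp] EnrHom.id_app EnrHom.comp_app

instance : Category (EnrCat V X) where
  Hom := EnrHom
  id A := { app := fun _ _ => 𝟙 _ }
  comp {A B C} f g :=
    { app := fun x y => f.app x y ≫ g.app x y
      id_app := by intro x; rw [← Category.assoc, f.id_app, g.id_app]
      comp_app := by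
        intro x y z
        rw [← Category.assoc, f.comp_app, Category.assoc, g.comp_app,
          ← Category.assoc, tensorHom_comp_tensorHom] }
  id_comp f := EnrHom.ext (by funext x y; simp)
  comp_id f := EnrHom.ext (by funext x y; simp)
  assoc f g h := EnrHom.ext (by funext x y; simp)

def transportStr (F : V ⥤ V') [F.LaxMonoidal] (A : EnrichedCategory V X) :
    EnrichedCategory V' X :=
  letI := A
  inferInstanceAs (EnrichedCategory V' (TransportEnrichment F X))

def transport (F : V ⥤ V') [F.LaxMonoidal] : EnrCat V X ⥤ EnrCat V' X where
  obj A := ⟨transportStr F A.str⟩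
  map {A B} f :=
    { app := fun x y => F.map (f.app x y)
      id_app := by
        intro x
        show (ε F ≫ F.map (A.str.id x)) ≫ F.map (f.app x x) = ε F ≫ F.map (B.str.id x)
        rw [Category.assoc, ← F.map_comp, f.id_app]
      comp_app := by
        intro x y z
        show (μ F _ _ ≫ F.map (A.str.comp x y z)) ≫ F.map (f.app x z) =
          (F.map (f.app x y) ⊗ₘ F.map (f.app y z)) ≫ μ F _ _ ≫ F.map (B.str.comp x y z)
        rw [Category.assoc, ← F.map_comp, f.comp_app, F.map_comp,
          ← Category.assoc, ← Functor.LaxMonoidal.μ_natural, Category.assoc] }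
  map_id A := EnrHom.ext (by funext x y; exact F.map_id _)
  map_comp f g := EnrHom.ext (by funext x y; exact F.map_comp _ _)

end Stmt17

namespace CategoryTheory.Adjunction

variable {C D : Type*} [Category C] [Category D] [MonoidalCategory C] [MonoidalCategory D]
  {F : C ⥤ D} {G : D ⥤ C} (adj : F ⊣ G)

section OplaxLax

open Functor.OplaxMonoidal

variable [F.OplaxMonoidal] [G.LaxMonoidal] [adj.IsMonoidal]

lemma homEquiv_symm_ε : (adj.homEquiv _ _).symm (ε G) = η F := by
  rw [homEquiv_counit, map_ε_comp_counit_app_unit]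

lemma homEquiv_symm_tensorHom_comp_μ {a₁ a₂ : C} {b₁ b₂ : D}
    (ψ₁ : a₁ ⟶ G.obj b₁) (ψ₂ : a₂ ⟶ G.obj b₂) :
    (adj.homEquiv _ _).symm ((ψ₁ ⊗ₘ ψ₂) ≫ μ G b₁ b₂) =
      δ F a₁ a₂ ≫ ((adj.homEquiv _ _).symm ψ₁ ⊗ₘ (adj.homEquiv _ _).symm ψ₂) := by
  simp only [homEquiv_counit, Functor.map_comp, Category.assoc, map_μ_comp_counit_app_tensor,
    ← tensorHom_comp_tensorHom, δ_natural_assoc]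

end OplaxLax

section MonoidalLax

variable [F.Monoidal] [G.LaxMonoidal] [adj.IsMonoidal]

lemma comp_homEquiv_eq_ε_comp_map_iff {a : C} {b : D} (ia : 𝟙_ C ⟶ a) (ib : 𝟙_ D ⟶ b)
    (φ : F.obj a ⟶ b) :
    ia ≫ adj.homEquiv _ _ φ = ε G ≫ G.map ib ↔ (ε F ≫ F.map ia) ≫ φ = ib := by
  rw [← (adj.homEquiv _ _).symm.injective.eq_iff, homEquiv_naturality_left_symm,
    Equiv.symm_apply_apply, homEquiv_naturality_right_symm, homEquiv_symm_ε, Category.assoc]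
  exact Iso.eq_inv_comp (Functor.Monoidal.εIso F)

lemma comp_homEquiv_eq_tensorHom_comp_μ_comp_map_iff {a₁ a₂ a₃ : C} {b₁ b₂ b₃ : D}
    (ca : a₁ ⊗ a₂ ⟶ a₃) (cb : b₁ ⊗ b₂ ⟶ b₃) (φ₁ : F.obj a₁ ⟶ b₁) (φ₂ : F.obj a₂ ⟶ b₂)
    (φ₃ : F.obj a₃ ⟶ b₃) :
    ca ≫ adj.homEquiv _ _ φ₃ = (adj.homEquiv _ _ φ₁ ⊗ₘ adj.homEquiv _ _ φ₂) ≫ μ G _ _ ≫ G.map cb ↔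
      (μ F _ _ ≫ F.map ca) ≫ φ₃ = (φ₁ ⊗ₘ φ₂) ≫ cb := by
  rw [← (adj.homEquiv _ _).symm.injective.eq_iff, homEquiv_naturality_left_symm,
    Equiv.symm_apply_apply, ← Category.assoc, homEquiv_naturality_right_symm,
    homEquiv_symm_tensorHom_comp_μ, Equiv.symm_apply_apply, Equiv.symm_apply_apply,
    Category.assoc, Category.assoc]
  exact Iso.eq_inv_comp (Functor.Monoidal.μIso F _ _)

end MonoidalLax

end CategoryTheory.Adjunction

namespace Stmt17

variable {V : Type v} [Category.{w} V] [MonoidalCategory V]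
  {V' : Type v'} [Category.{w'} V'] [MonoidalCategory V'] {X : Type u}

section

variable {L : V ⥤ V'} [L.Monoidal] {R : V' ⥤ V} [R.LaxMonoidal] (adj : L ⊣ R) [adj.IsMonoidal]

def transportHomEquiv (A : EnrCat V X) (B : EnrCat V' X) :
    ((transport L).obj A ⟶ B) ≃ (A ⟶ (transport R).obj B) where
  toFun f :=
    { app := fun x y => adj.homEquiv _ _ (f.app x y)
      id_app := fun x => (adj.comp_homEquiv_eq_ε_comp_map_iff _ _ _).mpr (f.id_app x)
      comp_app := fun x y z =>
        (adj.comp_homEquiv_eq_tensorHom_comp_μ_comp_map_iff _ _ _ _ _).mpr (f.comp_app x y z) }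
  invFun g :=
    { app := fun x y => (adj.homEquiv _ _).symm (g.app x y)
      -- `erw`: the Hom objects of `(transport R).obj B` are `R.obj` of those of `B` only up to
      -- unfolding `transportStr`.
      id_app := fun x => (adj.comp_homEquiv_eq_ε_comp_map_iff _ _ _).mp <| by
        erw [Equiv.apply_symm_apply]; exact g.id_app x
      comp_app := fun x y z =>
        (adj.comp_homEquiv_eq_tensorHom_comp_μ_comp_map_iff _ _ _ _ _).mp <| by
          erw [Equiv.apply_symm_apply, Equiv.apply_symm_apply, Equiv.apply_symm_apply]
          exact g.comp_app x y z }
  left_inv f := EnrHom.ext <| by funext x y; exact (adj.homEquiv _ _).symm_apply_apply _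
  right_inv g := EnrHom.ext <| by funext x y; exact (adj.homEquiv _ _).apply_symm_apply _

def transportAdjunction : transport (X := X) L ⊣ transport R :=
  Adjunction.mkOfHomEquiv
    { homEquiv := transportHomEquiv adj
      homEquiv_naturality_left_symm := fun _ _ =>
        EnrHom.ext <| by funext x y; exact adj.homEquiv_naturality_left_symm _ _
      homEquiv_naturality_right := fun _ _ =>
        EnrHom.ext <| by funext x y; exact adj.homEquiv_naturality_right _ _ }

end

/-- if `L ⊣ R` is an adjunction of monoidal categories in which `L` is a
strong monoidal functor and `R` is its lax monoidal right adjoint, then for any object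
type `X`, composition with `L` and `R` induces an adjunction `L_* ⊣ R_*` between
`V`-enriched and `V'`-enriched categories with object type `X`. -/
theorem stmt17 (L : V ⥤ V') [L.Monoidal] (R : V' ⥤ V) [R.LaxMonoidal]
    (adj : L ⊣ R) [adj.IsMonoidal] :
    Nonempty ((transport (X := X) L) ⊣ (transport (X := X) R)) :=
  ⟨transportAdjunction adj⟩

end Stmt17
end
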